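/- Fix β > 0 and t > 0, and let E_β denote the Mittag-Leffler function. Then liminf_{θ → ∞} (log log E_β(θ t)) / (log θ) ≥ 1/β. -/

import Mathlib

/-!
Writing `z = w ^ β`, the `n`-th term of the series is `w ^ x / Γ(x + 1)` with `x = n β`, and
`log E_β(z)` is of exact order `w = z ^ (1 / β)`.

Upper bound: comparing `Γ(x + 1)` with `⌊x⌋ + 1` factorial and the exponential series gives
`y ^ x ≤ (x + 1) e ^ y Γ(x + 1)` for `y ≥ 1`; at `y = e² w` this bounds the `n`-th term by
`exp (e² w) · e ^ (-n β)`, a geometric series.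

Lower bound: log-convexity of `Γ` gives `Γ(x + 1) ≤ (x + 1) ^ x`, so the single term with
`n β ≈ w / (2e)` is at least `exp (w / (2e))`.

Hence `log log E_β(θ t) / log θ → 1 / β`.
-/

/-- The Mittag-Leffler function with parameter `β`: `E_β(z) = ∑ n, z^n / Γ(nβ + 1)`. -/
noncomputable def mittagLeffler (β z : ℝ) : ℝ := ∑' n : ℕ, z ^ n / Real.Gamma (n * β + 1)

open Real Filter Asymptotics Topology
open scoped Nat

namespace Real

theorem log_Gamma_add_one_le {x : ℝ} (hx : 0 ≤ x) : log (Gamma (x + 1)) ≤ x * log (x + 1) := by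
  set k := ⌊x⌋₊
  set l := x - k
  have hkx : (k : ℝ) ≤ x := Nat.floor_le hx
  have hl0 : 0 ≤ l := sub_nonneg.2 hkx
  have hl1 : l ≤ 1 := by have := Nat.lt_floor_add_one x; linarith
  have hk1 : (0 : ℝ) < k + 1 := by positivity
  -- log-convexity of `Γ` between the neighbouring integers `k + 1` and `k + 2`
  have hconv := convexOn_log_Gamma.2 (Set.mem_Ioi.2 hk1)
    (Set.mem_Ioi.2 (by linarith : (0 : ℝ) < k + 2)) (sub_nonneg.2 hl1) hl0 (sub_add_cancel 1 l)
  have hfac : (k ! : ℝ) ≤ (k + 1) ^ k := by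
    exact_mod_cast k.factorial_le_pow.trans (Nat.pow_le_pow_left k.le_succ k)
  have hfac_pos : (0 : ℝ) < k ! := by positivity
  have hlog_fac : log (k ! : ℝ) ≤ k * log (k + 1) := by
    rw [← log_pow]; exact log_le_log hfac_pos hfac
  have hΓ2 : Gamma (k + 2) = (k + 1) * k ! := by
    rw [show (k : ℝ) + 2 = (k + 1 : ℕ) + 1 by push_cast; ring, Gamma_nat_eq_factorial,
      Nat.factorial_succ]
    push_cast; ring
  simp only [smul_eq_mul, Function.comp_apply] at hconv
  rw [show (1 - l) * (k + 1) + l * (k + 2) = x + 1 by ring, Gamma_nat_eq_factorial, hΓ2,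
    log_mul hk1.ne' hfac_pos.ne'] at hconv
  calc log (Gamma (x + 1)) ≤ log (k ! : ℝ) + l * log (k + 1) := by linarith
    _ ≤ x * log (k + 1) := by nlinarith
    _ ≤ x * log (x + 1) := by gcongr

theorem rpow_le_mul_exp_mul_Gamma {x y : ℝ} (hx : 0 ≤ x) (hy : 1 ≤ y) :
    y ^ x ≤ (x + 1) * exp y * Gamma (x + 1) := by
  set k := ⌊x⌋₊
  have hpow : y ^ x ≤ y ^ (k + 1) := by
    rw [← rpow_natCast]
    exact rpow_le_rpow_of_exponent_le hy (by push_cast; exact (Nat.lt_floor_add_one x).le)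
  have hexp : y ^ (k + 1) ≤ (k + 1)! * exp y := by
    have := pow_div_factorial_le_exp y (by linarith) (k + 1)
    rwa [div_le_iff₀ (by positivity), mul_comm] at this
  -- `(k + 1)! = Γ(k + 2) ≤ Γ(x + 2)` by monotonicity of `Γ` on `[2, ∞)`
  have hΓ : ((k + 1)! : ℝ) ≤ (x + 1) * Gamma (x + 1) := by
    rw [← Gamma_add_one (by positivity), ← Gamma_nat_eq_factorial]
    push_cast
    have hkx : (k : ℝ) ≤ x := Nat.floor_le hx
    have hk0 : (0 : ℝ) ≤ k := k.cast_nonneg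
    exact Gamma_strictMonoOn_Ici.monotoneOn (Set.mem_Ici.2 (by linarith))
      (Set.mem_Ici.2 (by linarith)) (by linarith)
  calc y ^ x ≤ (k + 1)! * exp y := hpow.trans hexp
    _ ≤ (x + 1) * Gamma (x + 1) * exp y := by gcongr
    _ = _ := by ring

end Real

theorem norm_mittagLeffler_term_le {β w z : ℝ} (hβ : 0 < β) (hw : 1 ≤ w) (hz : |z| ≤ w ^ β)
    (n : ℕ) : ‖z ^ n / Gamma (n * β + 1)‖ ≤ exp (exp 2 * w) * exp (-β) ^ n := by
  set x : ℝ := n * β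
  have hx : 0 ≤ x := by positivity
  have hΓ : 0 < Gamma (x + 1) := Gamma_pos_of_pos (by positivity)
  have hzx : |z| ^ n ≤ w ^ x := by
    calc |z| ^ n ≤ (w ^ β) ^ n := by gcongr
      _ = w ^ x := by rw [← rpow_natCast, ← rpow_mul (by positivity), mul_comm]
  -- the Gamma bound at `y = e² w`, with the factor `x + 1 ≤ eˣ` absorbed into `(e²)ˣ = e²ˣ`
  have hGamma := rpow_le_mul_exp_mul_Gamma (y := exp 2 * w) hx
    (one_le_mul_of_one_le_of_one_le (one_le_exp (by norm_num)) hw)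
  rw [mul_rpow (exp_pos 2).le (by positivity), ← exp_mul] at hGamma
  have hwx : exp x * w ^ x ≤ exp (exp 2 * w) * Gamma (x + 1) := by
    refine le_of_mul_le_mul_left ?_ (exp_pos x)
    calc exp x * (exp x * w ^ x) = exp (2 * x) * w ^ x := by
          rw [← mul_assoc, ← exp_add, two_mul]
      _ ≤ (x + 1) * exp (exp 2 * w) * Gamma (x + 1) := hGamma
      _ ≤ exp x * exp (exp 2 * w) * Gamma (x + 1) := by gcongr; exact add_one_le_exp x
      _ = _ := by ring
  rw [norm_div, norm_pow, norm_eq_abs, norm_eq_abs, abs_of_pos hΓ, div_le_iff₀ hΓ]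
  calc |z| ^ n ≤ w ^ x := hzx
    _ = exp (-x) * (exp x * w ^ x) := by
        rw [← mul_assoc, ← exp_add, neg_add_cancel, exp_zero, one_mul]
    _ ≤ exp (-x) * (exp (exp 2 * w) * Gamma (x + 1)) := by gcongr
    _ = _ := by rw [← exp_nat_mul, mul_neg]; ring

theorem summable_mittagLeffler {β : ℝ} (hβ : 0 < β) (z : ℝ) :
    Summable fun n : ℕ => z ^ n / Gamma (n * β + 1) := by
  have hz : |z| ≤ max 1 (|z| ^ β⁻¹) ^ β :=
    calc |z| = (|z| ^ β⁻¹) ^ β := (rpow_inv_rpow (abs_nonneg z) hβ.ne').symm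
      _ ≤ _ := by gcongr; exact le_max_right _ _
  exact .of_norm_bounded
    ((summable_geometric_of_lt_one (exp_pos _).le (exp_lt_one_iff.2 (by linarith))).mul_left _)
    (norm_mittagLeffler_term_le hβ (le_max_left _ _) hz)

theorem mittagLeffler_le {β w z : ℝ} (hβ : 0 < β) (hw : 1 ≤ w) (hz : |z| ≤ w ^ β) :
    mittagLeffler β z ≤ exp (exp 2 * w) * (1 - exp (-β))⁻¹ :=
  (le_abs_self _).trans <| tsum_of_norm_bounded
    ((hasSum_geometric_of_lt_one (exp_pos _).le (exp_lt_one_iff.2 (by linarith))).mul_left _)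
    (norm_mittagLeffler_term_le hβ hw hz)

theorem term_le_mittagLeffler {β z : ℝ} (hβ : 0 < β) (hz : 0 ≤ z) (n : ℕ) :
    z ^ n / Gamma (n * β + 1) ≤ mittagLeffler β z :=
  (summable_mittagLeffler hβ z).le_tsum n fun j _ ↦ by
    have := Gamma_pos_of_pos (by positivity : (0 : ℝ) < j * β + 1)
    positivity

theorem one_le_mittagLeffler {β z : ℝ} (hβ : 0 < β) (hz : 0 ≤ z) : 1 ≤ mittagLeffler β z := by
  simpa using term_le_mittagLeffler hβ hz 0

theorem log_mittagLeffler_le {β z : ℝ} (hβ : 0 < β) (hz : 1 ≤ z) :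
    log (mittagLeffler β z) ≤ (exp 2 - log (1 - exp (-β))) * z ^ (1 / β) := by
  set w := z ^ (1 / β)
  have hw : 1 ≤ w := one_le_rpow hz (by positivity)
  have hzw : w ^ β = |z| := by
    rw [abs_of_nonneg (by linarith), ← rpow_mul (by linarith), one_div, inv_mul_cancel₀ hβ.ne',
      rpow_one]
  have hr : 0 < 1 - exp (-β) := sub_pos.2 (exp_lt_one_iff.2 (by linarith))
  have hlog_r : log (1 - exp (-β)) ≤ 0 := log_nonpos hr.le (by linarith [exp_pos (-β)])
  calc log (mittagLeffler β z) ≤ log (exp (exp 2 * w) * (1 - exp (-β))⁻¹) :=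
        log_le_log (by linarith [one_le_mittagLeffler hβ (by linarith : (0 : ℝ) ≤ z)])
          (mittagLeffler_le hβ hw hzw.ge)
    _ = exp 2 * w - log (1 - exp (-β)) := by
        rw [log_mul (by positivity) (inv_pos.2 hr).ne', log_exp, log_inv]; ring
    _ ≤ _ := by nlinarith [mul_nonneg (neg_nonneg.2 hlog_r) (sub_nonneg.2 hw)]

theorem mul_sub_log_le_log_mittagLeffler_rpow {β w : ℝ} (hβ : 0 < β) (hw : 0 < w) (n : ℕ) :
    n * β * (log w - log (n * β + 1)) ≤ log (mittagLeffler β (w ^ β)) := by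
  have hΓ : 0 < Gamma (n * β + 1) := Gamma_pos_of_pos (by positivity)
  calc n * β * (log w - log (n * β + 1))
      ≤ n * β * log w - log (Gamma (n * β + 1)) := by
        have := log_Gamma_add_one_le (by positivity : 0 ≤ (n : ℝ) * β); linarith
    _ = log ((w ^ β) ^ n / Gamma (n * β + 1)) := by
        rw [log_div (by positivity) hΓ.ne', log_pow, log_rpow hw]; ring
    _ ≤ log (mittagLeffler β (w ^ β)) :=
        log_le_log (by positivity) (term_le_mittagLeffler hβ (by positivity) n)

theorem rpow_div_le_log_mittagLeffler {β z : ℝ} (hβ : 0 < β)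
    (hz : (2 * exp 1 * (β + 1)) ^ β ≤ z) :
    z ^ (1 / β) / (2 * exp 1) ≤ log (mittagLeffler β z) := by
  set w := z ^ (1 / β)
  have he : 0 < 2 * exp 1 := by positivity
  have hz0 : 0 ≤ z := le_trans (by positivity) hz
  have hzw : w ^ β = z := by rw [← rpow_mul hz0, one_div, inv_mul_cancel₀ hβ.ne', rpow_one]
  have hw : 2 * exp 1 * (β + 1) ≤ w := by
    calc 2 * exp 1 * (β + 1) = ((2 * exp 1 * (β + 1)) ^ β) ^ (1 / β) := by
          rw [one_div, rpow_rpow_inv (by positivity) hβ.ne']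
      _ ≤ w := rpow_le_rpow (by positivity) hz (by positivity)
  have hw0 : 0 < w := lt_of_lt_of_le (by positivity) hw
  set n := ⌈w / (2 * exp 1 * β)⌉₊
  have hn_ge : w / (2 * exp 1) ≤ n * β := by
    have := Nat.le_ceil (w / (2 * exp 1 * β))
    rw [div_le_iff₀ (by positivity)] at this ⊢
    linarith
  have hn_lt : n * β + 1 ≤ w / exp 1 := by
    have h1 : n * β < w / (2 * exp 1) + β :=
      calc n * β < (w / (2 * exp 1 * β) + 1) * β :=
            mul_lt_mul_of_pos_right (Nat.ceil_lt_add_one (by positivity)) hβ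
        _ = w / (2 * exp 1) + β := by field_simp
    have h2 : β + 1 ≤ w / (2 * exp 1) := by rw [le_div_iff₀ he]; linarith
    calc n * β + 1 ≤ w / (2 * exp 1) + w / (2 * exp 1) := by linarith
      _ = w / exp 1 := by field_simp; ring
  have hlog : 1 ≤ log w - log (n * β + 1) := by
    have := log_le_log (by positivity) hn_lt
    rw [log_div (by positivity) (exp_pos 1).ne', log_exp] at this
    linarith
  calc w / (2 * exp 1) ≤ n * β := hn_ge
    _ ≤ n * β * (log w - log (n * β + 1)) := le_mul_of_one_le_right (by positivity) hlog
    _ ≤ log (mittagLeffler β z) := hzw ▸ mul_sub_log_le_log_mittagLeffler_rpow hβ hw0 n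

theorem isTheta_log_mittagLeffler {β : ℝ} (hβ : 0 < β) :
    (fun z ↦ log (mittagLeffler β z)) =Θ[atTop] fun z ↦ z ^ (1 / β) := by
  refine ⟨.of_bound (exp 2 - log (1 - exp (-β))) ?_, .of_bound (2 * exp 1) ?_⟩
  · filter_upwards [eventually_ge_atTop 1] with z hz
    rw [norm_of_nonneg (log_nonneg (one_le_mittagLeffler hβ (by linarith))),
      norm_of_nonneg (by positivity)]
    exact log_mittagLeffler_le hβ hz
  · filter_upwards [eventually_ge_atTop ((2 * exp 1 * (β + 1)) ^ β)] with z hz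
    have hz0 : 0 ≤ z := le_trans (by positivity) hz
    have := rpow_div_le_log_mittagLeffler hβ hz
    rw [div_le_iff₀ (by positivity)] at this
    rw [norm_of_nonneg (by positivity),
      norm_of_nonneg (log_nonneg (one_le_mittagLeffler hβ hz0))]
    linarith

theorem tendsto_log_div_log_of_isTheta_rpow {f : ℝ → ℝ} {p : ℝ}
    (h : f =Θ[atTop] fun x ↦ x ^ p) :
    Tendsto (fun x ↦ log (f x) / log x) atTop (𝓝 p) := by
  obtain ⟨c₁, hc₁, hf⟩ := h.1.exists_pos
  obtain ⟨c₂, hc₂, hg⟩ := h.2.exists_pos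
  have hlim (c : ℝ) : Tendsto (fun x ↦ p + c / log x) atTop (𝓝 p) := by
    simpa using tendsto_const_nhds.add (tendsto_const_nhds.div_atTop tendsto_log_atTop)
  have hbounds : ∀ᶠ x in atTop, p + -log c₂ / log x ≤ log (f x) / log x ∧
      log (f x) / log x ≤ p + log c₁ / log x := by
    filter_upwards [hf.bound, hg.bound, eventually_gt_atTop 1] with x hfx hgx hx
    have hx0 : 0 < x := by linarith
    have hlogx : 0 < log x := log_pos hx
    have hxp : 0 < x ^ p := rpow_pos_of_pos hx0 p
    simp only [norm_eq_abs, abs_of_pos hxp] at hfx hgx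
    have hpos : 0 < |f x| := by nlinarith
    rw [← log_abs (f x), add_div' _ _ _ hlogx.ne', add_div' _ _ _ hlogx.ne',
      div_le_div_iff_of_pos_right hlogx, div_le_div_iff_of_pos_right hlogx]
    constructor
    · have hlow : x ^ p / c₂ ≤ |f x| := (div_le_iff₀ hc₂).2 (by linarith)
      have := log_le_log (by positivity) hlow
      rw [log_div (by positivity) hc₂.ne', log_rpow hx0] at this
      linarith
    · have := log_le_log hpos hfx
      rw [log_mul hc₁.ne' (by positivity), log_rpow hx0] at this
      linarith
  exact tendsto_of_tendsto_of_tendsto_of_le_of_le' (hlim _) (hlim _)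
    (hbounds.mono fun _ h ↦ h.1) (hbounds.mono fun _ h ↦ h.2)

theorem mittagLeffler_liminf (β t : ℝ) (hβ : 0 < β) (ht : 0 < t) :
    1 / β ≤ Filter.liminf
      (fun θ : ℝ => Real.log (Real.log (mittagLeffler β (θ * t))) / Real.log θ)
      Filter.atTop := by
  have hscale : Tendsto (fun θ : ℝ ↦ θ * t) atTop atTop := tendsto_id.atTop_mul_const ht
  have hΘ : (fun θ ↦ log (mittagLeffler β (θ * t))) =Θ[atTop] fun θ ↦ θ ^ (1 / β) := by
    have hE := isTheta_log_mittagLeffler hβ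
    have hrpow :
        (fun θ ↦ (θ * t) ^ (1 / β)) =ᶠ[atTop] fun θ ↦ t ^ (1 / β) * θ ^ (1 / β) := by
      filter_upwards [eventually_ge_atTop 0] with θ hθ
      rw [mul_rpow hθ ht.le, mul_comm]
    exact (IsTheta.trans_eventuallyEq ⟨hE.1.comp_tendsto hscale, hE.2.comp_tendsto hscale⟩
      hrpow).trans ((isTheta_const_mul_left (by positivity)).2 (isTheta_refl _ _))
  exact (tendsto_log_div_log_of_isTheta_rpow hΘ).liminf_eq.ge
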